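/- Assume 0.9·d_{i0} ≤ d_i ≤ 1.1·d_{i0} for every i, 0 < ε ≤ 1/15, the Local RIP holds, and ‖𝒜*(e)‖ ≤ εd_0/(10√2·sκ). If (u^{(0)},v^{(0)}) satisfies ‖u_i^{(0)}‖ ≤ (2/√3)√d_{i0}, ‖v_i^{(0)}‖ ≤ (2/√3)√d_{i0}, √L‖Bu_i^{(0)}‖_∞ ≤ (4/√3)√d_{i0}μ, and δ_i(u_i^{(0)},v_i^{(0)}) ≤ 2ε/(5√s·κ) for all i, then G(u^{(0)},v^{(0)}) = 0 and F̃(u^{(0)},v^{(0)}) = F(u^{(0)},v^{(0)}) ≤ ‖e‖² + ε²d_0²/(3sκ²); in particular (u^{(0)},v^{(0)}) ∈ 𝒩_ε ∩ 𝒩_F̃. -/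

import Mathlib

noncomputable section
open Finset ComplexConjugate

namespace RGD

/-- Squared Euclidean norm of a complex vector. -/
def vnormSq {n : ℕ} (v : Fin n → ℂ) : ℝ := ∑ j, ‖v j‖ ^ 2

/-- Euclidean norm of a complex vector. -/
def vnorm {n : ℕ} (v : Fin n → ℂ) : ℝ := Real.sqrt (vnormSq v)

/-- Inner product, conjugate-linear in the first argument. -/
def vinner {n : ℕ} (u v : Fin n → ℂ) : ℂ := ∑ j, conj (u j) * v j

/-- Squared Frobenius norm of a matrix. -/
def frobSq {K N : ℕ} (Z : Matrix (Fin K) (Fin N) ℂ) : ℝ := ∑ k, ∑ j, ‖Z k j‖ ^ 2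

/-- Frobenius norm of a matrix. -/
def frob {K N : ℕ} (Z : Matrix (Fin K) (Fin N) ℂ) : ℝ := Real.sqrt (frobSq Z)

/-- Frobenius inner product `⟨U,V⟩ = Tr(U*V)`, conjugate-linear in the first argument. -/
def finner {K N : ℕ} (U V : Matrix (Fin K) (Fin N) ℂ) : ℂ := ∑ k, ∑ j, conj (U k j) * V k j

/-- Spectral (operator) norm of a matrix: sup of `‖Zv‖` over the closed unit ball. -/
def opNorm {K N : ℕ} (Z : Matrix (Fin K) (Fin N) ℂ) : ℝ :=
  sSup {r : ℝ | ∃ v : Fin N → ℂ, vnorm v ≤ 1 ∧ r = vnorm (Z.mulVec v)}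

/-- Squared Frobenius norm of a block-diagonal matrix, given by its diagonal blocks. -/
def famFrobSq {K N s : ℕ} (Z : Fin s → Matrix (Fin K) (Fin N) ℂ) : ℝ := ∑ i, frobSq (Z i)

/-- Frobenius norm of a block-diagonal matrix, given by its diagonal blocks. -/
def famFrob {K N s : ℕ} (Z : Fin s → Matrix (Fin K) (Fin N) ℂ) : ℝ := Real.sqrt (famFrobSq Z)

/-- The rank-one matrix `u v*`. -/
def rankOne {K N : ℕ} (u : Fin K → ℂ) (v : Fin N → ℂ) : Matrix (Fin K) (Fin N) ℂ :=
  Matrix.of fun k j => u k * conj (v j)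

/-- `ℋ(h,x)`: block-diagonal matrix with `i`-th block `hᵢ xᵢ*`. -/
def Hmap {K N s : ℕ} (h : Fin s → Fin K → ℂ) (x : Fin s → Fin N → ℂ) :
    Fin s → Matrix (Fin K) (Fin N) ℂ := fun i => rankOne (h i) (x i)

/-- `𝒜ᵢ(Z) = (bₗ* Z aₗ)ₗ`. -/
def calAi {K N L : ℕ} (b : Fin L → Fin K → ℂ) (a : Fin L → Fin N → ℂ)
    (Z : Matrix (Fin K) (Fin N) ℂ) : Fin L → ℂ :=
  fun l => vinner (b l) (Z.mulVec (a l))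

/-- `𝒜(Z) = Σᵢ 𝒜ᵢ(Zᵢ)` on block-diagonal matrices. -/
def calA {K N L s : ℕ} (b : Fin L → Fin K → ℂ) (a : Fin s → Fin L → Fin N → ℂ)
    (Z : Fin s → Matrix (Fin K) (Fin N) ℂ) : Fin L → ℂ :=
  fun l => ∑ i, calAi b (a i) (Z i) l

/-- `𝒜ᵢ*(z) = Σₗ zₗ bₗ aₗ*`. -/
def calAdj {K N L : ℕ} (b : Fin L → Fin K → ℂ) (a : Fin L → Fin N → ℂ)
    (z : Fin L → ℂ) : Matrix (Fin K) (Fin N) ℂ :=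
  Matrix.of fun k j => ∑ l, z l * b l k * conj (a l j)

/-- `‖𝒜*(e)‖ = maxᵢ ‖𝒜ᵢ*(e)‖` (operator norms). -/
def AadjNorm {K N L s : ℕ} (b : Fin L → Fin K → ℂ) (a : Fin s → Fin L → Fin N → ℂ)
    (e : Fin L → ℂ) : ℝ :=
  ⨆ i : Fin s, opNorm (calAdj b (a i) e)

/-- `B*B = I_K`, expressed in terms of the columns `bₗ` of `B*`. -/
def BtBeqI {K L : ℕ} (b : Fin L → Fin K → ℂ) : Prop :=
  ∀ k k' : Fin K, (∑ l, b l k * conj (b l k')) = if k = k' then (1 : ℂ) else 0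

/-- `μ ≥ μ_h`, i.e. `√L ‖B h_{i0}‖_∞ ≤ μ ‖h_{i0}‖` for all `i`. -/
def muhLe {K L s : ℕ} (b : Fin L → Fin K → ℂ) (h0 : Fin s → Fin K → ℂ) (μ : ℝ) : Prop :=
  ∀ i l, Real.sqrt L * ‖vinner (b l) (h0 i)‖ ≤ μ * vnorm (h0 i)

/-- `d₀ = √(Σᵢ d_{i0}²)`. -/
def dtot {s : ℕ} (d0 : Fin s → ℝ) : ℝ := Real.sqrt (∑ i, d0 i ^ 2)

/-- Condition number `κ = (maxᵢ d_{i0}) / (minᵢ d_{i0})`. -/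
def kappa {s : ℕ} (d0 : Fin s → ℝ) : ℝ := (⨆ i, d0 i) / (⨅ i, d0 i)

/-- The observation `y = 𝒜(ℋ(h₀,x₀)) + e`. -/
def yvec {K N L s : ℕ} (b : Fin L → Fin K → ℂ) (a : Fin s → Fin L → Fin N → ℂ)
    (h0 : Fin s → Fin K → ℂ) (x0 : Fin s → Fin N → ℂ) (e : Fin L → ℂ) : Fin L → ℂ :=
  fun l => calA b a (Hmap h0 x0) l + e l

/-- `F(h,x) = ‖𝒜(ℋ(h,x)) − y‖²`. -/
def Fobj {K N L s : ℕ} (b : Fin L → Fin K → ℂ) (a : Fin s → Fin L → Fin N → ℂ)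
    (h0 : Fin s → Fin K → ℂ) (x0 : Fin s → Fin N → ℂ) (e : Fin L → ℂ)
    (h : Fin s → Fin K → ℂ) (x : Fin s → Fin N → ℂ) : ℝ :=
  vnormSq (fun l => calA b a (Hmap h x) l - yvec b a h0 x0 e l)

def G0 (z : ℝ) : ℝ := max (z - 1) 0 ^ 2

def G0' (z : ℝ) : ℝ := 2 * max (z - 1) 0

/-- The `i`-th regularizer `Gᵢ(hᵢ,xᵢ)` (including the factor `ρ`). -/
def Gi {K N L : ℕ} (b : Fin L → Fin K → ℂ) (ρ μ di : ℝ)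
    (hi : Fin K → ℂ) (xi : Fin N → ℂ) : ℝ :=
  ρ * (G0 (vnormSq hi / (2 * di)) + G0 (vnormSq xi / (2 * di))
    + ∑ l, G0 ((L : ℝ) * ‖vinner (b l) hi‖ ^ 2 / (8 * di * μ ^ 2)))

/-- The regularizer `G(h,x) = Σᵢ Gᵢ(hᵢ,xᵢ)`. -/
def Greg {K N L s : ℕ} (b : Fin L → Fin K → ℂ) (ρ μ : ℝ) (dd : Fin s → ℝ)
    (h : Fin s → Fin K → ℂ) (x : Fin s → Fin N → ℂ) : ℝ :=
  ∑ i, Gi b ρ μ (dd i) (h i) (x i)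

/-- `F̃ = F + G`. -/
def Ftil {K N L s : ℕ} (b : Fin L → Fin K → ℂ) (a : Fin s → Fin L → Fin N → ℂ)
    (h0 : Fin s → Fin K → ℂ) (x0 : Fin s → Fin N → ℂ) (e : Fin L → ℂ)
    (ρ μ : ℝ) (dd : Fin s → ℝ)
    (h : Fin s → Fin K → ℂ) (x : Fin s → Fin N → ℂ) : ℝ :=
  Fobj b a h0 x0 e h x + Greg b ρ μ dd h x

/-- The residual `𝒜(ℋ(h,x)) − y`. -/
def residual {K N L s : ℕ} (b : Fin L → Fin K → ℂ) (a : Fin s → Fin L → Fin N → ℂ)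
    (h0 : Fin s → Fin K → ℂ) (x0 : Fin s → Fin N → ℂ) (e : Fin L → ℂ)
    (h : Fin s → Fin K → ℂ) (x : Fin s → Fin N → ℂ) : Fin L → ℂ :=
  fun l => calA b a (Hmap h x) l - yvec b a h0 x0 e l

/-- Wirtinger gradient `∇F_{hᵢ} = 𝒜ᵢ*(𝒜(ℋ(h,x)) − y) xᵢ`. -/
def gradFh {K N L s : ℕ} (b : Fin L → Fin K → ℂ) (a : Fin s → Fin L → Fin N → ℂ)
    (h0 : Fin s → Fin K → ℂ) (x0 : Fin s → Fin N → ℂ) (e : Fin L → ℂ)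
    (h : Fin s → Fin K → ℂ) (x : Fin s → Fin N → ℂ) (i : Fin s) : Fin K → ℂ :=
  (calAdj b (a i) (residual b a h0 x0 e h x)).mulVec (x i)

/-- Wirtinger gradient `∇F_{xᵢ} = (𝒜ᵢ*(𝒜(ℋ(h,x)) − y))* hᵢ`. -/
def gradFx {K N L s : ℕ} (b : Fin L → Fin K → ℂ) (a : Fin s → Fin L → Fin N → ℂ)
    (h0 : Fin s → Fin K → ℂ) (x0 : Fin s → Fin N → ℂ) (e : Fin L → ℂ)
    (h : Fin s → Fin K → ℂ) (x : Fin s → Fin N → ℂ) (i : Fin s) : Fin N → ℂ :=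
  (calAdj b (a i) (residual b a h0 x0 e h x)).conjTranspose.mulVec (h i)

/-- Wirtinger gradient `∇G_{hᵢ}`. -/
def gradGh {K L s : ℕ} (b : Fin L → Fin K → ℂ) (ρ μ : ℝ) (dd : Fin s → ℝ)
    (h : Fin s → Fin K → ℂ) (i : Fin s) : Fin K → ℂ :=
  fun k => ((ρ / (2 * dd i) : ℝ) : ℂ) *
    (((G0' (vnormSq (h i) / (2 * dd i)) : ℝ) : ℂ) * h i k
      + (((L : ℝ) / (4 * μ ^ 2) : ℝ) : ℂ) *
        ∑ l, ((G0' ((L : ℝ) * ‖vinner (b l) (h i)‖ ^ 2 / (8 * dd i * μ ^ 2)) : ℝ) : ℂ)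
          * (vinner (b l) (h i) * b l k))

/-- Wirtinger gradient `∇G_{xᵢ}`. -/
def gradGx {N s : ℕ} (ρ : ℝ) (dd : Fin s → ℝ)
    (x : Fin s → Fin N → ℂ) (i : Fin s) : Fin N → ℂ :=
  fun j => ((ρ / (2 * dd i) : ℝ) : ℂ) * (((G0' (vnormSq (x i) / (2 * dd i)) : ℝ) : ℂ) * x i j)

/-- `∇F̃_{hᵢ} = ∇F_{hᵢ} + ∇G_{hᵢ}`. -/
def gradH {K N L s : ℕ} (b : Fin L → Fin K → ℂ) (a : Fin s → Fin L → Fin N → ℂ)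
    (h0 : Fin s → Fin K → ℂ) (x0 : Fin s → Fin N → ℂ) (e : Fin L → ℂ)
    (ρ μ : ℝ) (dd : Fin s → ℝ)
    (h : Fin s → Fin K → ℂ) (x : Fin s → Fin N → ℂ) (i : Fin s) : Fin K → ℂ :=
  fun k => gradFh b a h0 x0 e h x i k + gradGh b ρ μ dd h i k

/-- `∇F̃_{xᵢ} = ∇F_{xᵢ} + ∇G_{xᵢ}`. -/
def gradX {K N L s : ℕ} (b : Fin L → Fin K → ℂ) (a : Fin s → Fin L → Fin N → ℂ)
    (h0 : Fin s → Fin K → ℂ) (x0 : Fin s → Fin N → ℂ) (e : Fin L → ℂ)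
    (ρ μ : ℝ) (dd : Fin s → ℝ)
    (h : Fin s → Fin K → ℂ) (x : Fin s → Fin N → ℂ) (i : Fin s) : Fin N → ℂ :=
  fun j => gradFx b a h0 x0 e h x i j + gradGx ρ dd x i j

/-- `‖∇F̃(h,x)‖²` (squared norm of the stacked Wirtinger gradient). -/
def gradNormSq {K N L s : ℕ} (b : Fin L → Fin K → ℂ) (a : Fin s → Fin L → Fin N → ℂ)
    (h0 : Fin s → Fin K → ℂ) (x0 : Fin s → Fin N → ℂ) (e : Fin L → ℂ)
    (ρ μ : ℝ) (dd : Fin s → ℝ)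
    (h : Fin s → Fin K → ℂ) (x : Fin s → Fin N → ℂ) : ℝ :=
  ∑ i, vnormSq (gradH b a h0 x0 e ρ μ dd h x i) + ∑ i, vnormSq (gradX b a h0 x0 e ρ μ dd h x i)

/-- `‖∇F̃(h',x') − ∇F̃(h,x)‖²`. -/
def gradDiffNormSq {K N L s : ℕ} (b : Fin L → Fin K → ℂ) (a : Fin s → Fin L → Fin N → ℂ)
    (h0 : Fin s → Fin K → ℂ) (x0 : Fin s → Fin N → ℂ) (e : Fin L → ℂ)
    (ρ μ : ℝ) (dd : Fin s → ℝ)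
    (h : Fin s → Fin K → ℂ) (x : Fin s → Fin N → ℂ)
    (h' : Fin s → Fin K → ℂ) (x' : Fin s → Fin N → ℂ) : ℝ :=
  ∑ i, vnormSq (fun k => gradH b a h0 x0 e ρ μ dd h' x' i k - gradH b a h0 x0 e ρ μ dd h x i k)
  + ∑ i, vnormSq (fun j => gradX b a h0 x0 e ρ μ dd h' x' i j - gradX b a h0 x0 e ρ μ dd h x i j)

/-- Membership in `𝒩_d`. -/
def inNd {K N s : ℕ} (d0 : Fin s → ℝ)
    (h : Fin s → Fin K → ℂ) (x : Fin s → Fin N → ℂ) : Prop :=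
  ∀ i, vnorm (h i) ≤ 2 * Real.sqrt (d0 i) ∧ vnorm (x i) ≤ 2 * Real.sqrt (d0 i)

/-- Membership in `𝒩_μ`. -/
def inNmu {K L s : ℕ} (b : Fin L → Fin K → ℂ) (d0 : Fin s → ℝ) (μ : ℝ)
    (h : Fin s → Fin K → ℂ) : Prop :=
  ∀ i, ∀ l, Real.sqrt L * ‖vinner (b l) (h i)‖ ≤ 4 * Real.sqrt (d0 i) * μ

/-- `δᵢ(hᵢ,xᵢ) = ‖hᵢxᵢ* − h_{i0}x_{i0}*‖_F / d_{i0}`. -/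
def deltaI {K N : ℕ} (h0i : Fin K → ℂ) (x0i : Fin N → ℂ) (d0i : ℝ)
    (hi : Fin K → ℂ) (xi : Fin N → ℂ) : ℝ :=
  frob (rankOne hi xi - rankOne h0i x0i) / d0i

/-- Membership in `𝒩_ε`. -/
def inNeps {K N s : ℕ} (h0 : Fin s → Fin K → ℂ) (x0 : Fin s → Fin N → ℂ)
    (d0 : Fin s → ℝ) (ε : ℝ)
    (h : Fin s → Fin K → ℂ) (x : Fin s → Fin N → ℂ) : Prop :=
  ∀ i, deltaI (h0 i) (x0 i) (d0 i) (h i) (x i) ≤ ε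

/-- The global relative error `δ(h,x) = ‖ℋ(h,x) − X₀‖_F / d₀`. -/
def deltaTot {K N s : ℕ} (h0 : Fin s → Fin K → ℂ) (x0 : Fin s → Fin N → ℂ)
    (d0 : Fin s → ℝ)
    (h : Fin s → Fin K → ℂ) (x : Fin s → Fin N → ℂ) : ℝ :=
  famFrob (fun i => Hmap h x i - Hmap h0 x0 i) / dtot d0

/-- Membership in `𝒩_F̃`. -/
def inNF {K N L s : ℕ} (b : Fin L → Fin K → ℂ) (a : Fin s → Fin L → Fin N → ℂ)
    (h0 : Fin s → Fin K → ℂ) (x0 : Fin s → Fin N → ℂ) (e : Fin L → ℂ)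
    (d0 : Fin s → ℝ) (ρ μ : ℝ) (dd : Fin s → ℝ) (ε : ℝ)
    (h : Fin s → Fin K → ℂ) (x : Fin s → Fin N → ℂ) : Prop :=
  Ftil b a h0 x0 e ρ μ dd h x ≤ ε ^ 2 * dtot d0 ^ 2 / (3 * (s : ℝ) * kappa d0 ^ 2) + vnormSq e

/-- The Local Restricted Isometry Property on `𝒩_d ∩ 𝒩_μ ∩ 𝒩_ε`. -/
def LocalRIP {K N L s : ℕ} (b : Fin L → Fin K → ℂ) (a : Fin s → Fin L → Fin N → ℂ)
    (h0 : Fin s → Fin K → ℂ) (x0 : Fin s → Fin N → ℂ)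
    (d0 : Fin s → ℝ) (μ ε : ℝ) : Prop :=
  ∀ (h : Fin s → Fin K → ℂ) (x : Fin s → Fin N → ℂ),
    inNd d0 h x → inNmu b d0 μ h → inNeps h0 x0 d0 ε h x →
      (2 / 3) * famFrobSq (fun i => Hmap h x i - Hmap h0 x0 i)
          ≤ vnormSq (calA b a fun i => Hmap h x i - Hmap h0 x0 i)
      ∧ vnormSq (calA b a fun i => Hmap h x i - Hmap h0 x0 i)
          ≤ (3 / 2) * famFrobSq (fun i => Hmap h x i - Hmap h0 x0 i)

/-- `α_{i1} = ⟨h_{i0}, hᵢ⟩ / d_{i0}`. -/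
def alpha1 {K s : ℕ} (h0 : Fin s → Fin K → ℂ) (d0 : Fin s → ℝ)
    (h : Fin s → Fin K → ℂ) (i : Fin s) : ℂ :=
  vinner (h0 i) (h i) / ((d0 i : ℝ) : ℂ)

/-- `α_{i2} = ⟨x_{i0}, xᵢ⟩ / d_{i0}`. -/
def alpha2 {N s : ℕ} (x0 : Fin s → Fin N → ℂ) (d0 : Fin s → ℝ)
    (x : Fin s → Fin N → ℂ) (i : Fin s) : ℂ :=
  vinner (x0 i) (x i) / ((d0 i : ℝ) : ℂ)

/-- `δ₀ = δ/10`. -/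
def delta0 {K N s : ℕ} (h0 : Fin s → Fin K → ℂ) (x0 : Fin s → Fin N → ℂ)
    (d0 : Fin s → ℝ) (h : Fin s → Fin K → ℂ) (x : Fin s → Fin N → ℂ) : ℝ :=
  deltaTot h0 x0 d0 h x / 10

/-- `αᵢ = (1−δ₀)α_{i1}` if `‖hᵢ‖ ≥ ‖xᵢ‖`, else `1/((1−δ₀) conj(α_{i2}))`. -/
def alphaC {K N s : ℕ} (h0 : Fin s → Fin K → ℂ) (x0 : Fin s → Fin N → ℂ)
    (d0 : Fin s → ℝ) (h : Fin s → Fin K → ℂ) (x : Fin s → Fin N → ℂ) (i : Fin s) : ℂ :=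
  if vnorm (x i) ≤ vnorm (h i)
  then ((1 - delta0 h0 x0 d0 h x : ℝ) : ℂ) * alpha1 h0 d0 h i
  else 1 / (((1 - delta0 h0 x0 d0 h x : ℝ) : ℂ) * conj (alpha2 x0 d0 x i))

/-- `Δhᵢ = hᵢ − αᵢ h_{i0}`. -/
def dh {K N s : ℕ} (h0 : Fin s → Fin K → ℂ) (x0 : Fin s → Fin N → ℂ)
    (d0 : Fin s → ℝ) (h : Fin s → Fin K → ℂ) (x : Fin s → Fin N → ℂ) (i : Fin s) :
    Fin K → ℂ :=
  fun k => h i k - alphaC h0 x0 d0 h x i * h0 i k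

/-- `Δxᵢ = xᵢ − conj(αᵢ)⁻¹ x_{i0}`. -/
def dx {K N s : ℕ} (h0 : Fin s → Fin K → ℂ) (x0 : Fin s → Fin N → ℂ)
    (d0 : Fin s → ℝ) (h : Fin s → Fin K → ℂ) (x : Fin s → Fin N → ℂ) (i : Fin s) :
    Fin N → ℂ :=
  fun j => x i j - (conj (alphaC h0 x0 d0 h x i))⁻¹ * x0 i j

/-- `σ²_max(h,x) = maxₗ Σᵢ |bₗ*hᵢ|² ‖xᵢ‖²`. -/
def sigmaMaxSq {K N L s : ℕ} (b : Fin L → Fin K → ℂ)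
    (h : Fin s → Fin K → ℂ) (x : Fin s → Fin N → ℂ) : ℝ :=
  ⨆ l : Fin L, ∑ i, ‖vinner (b l) (h i)‖ ^ 2 * vnormSq (x i)

/-- The rank-one bound (Lemma: `𝒜` on block-diagonal matrices with rank-1 blocks). -/
def RankOneBound {K N L s : ℕ} (b : Fin L → Fin K → ℂ)
    (a : Fin s → Fin L → Fin N → ℂ) : Prop :=
  ∀ (h : Fin s → Fin K → ℂ) (x : Fin s → Fin N → ℂ),
    vnormSq (calA b a (Hmap h x)) ≤
      4 / 3 * famFrobSq (Hmap h x)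
      + 2 * Real.sqrt (2 * (s : ℝ) * famFrobSq (Hmap h x) * sigmaMaxSq b h x
          * ((K : ℝ) + N) * Real.log L)
      + 8 * (s : ℝ) * sigmaMaxSq b h x * ((K : ℝ) + N) * Real.log L

/-- The subspace `Tᵢ = {h_{i0} v* + u x_{i0}*}`. -/
def Tspace {K N : ℕ} (h0i : Fin K → ℂ) (x0i : Fin N → ℂ) :
    Set (Matrix (Fin K) (Fin N) ℂ) :=
  {Z | ∃ (u : Fin K → ℂ) (v : Fin N → ℂ), Z = rankOne h0i v + rankOne u x0i}

/-- `P` is the orthogonal projection onto `Tᵢ` w.r.t. the Frobenius inner product. -/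
def IsFrobProj {K N : ℕ} (h0i : Fin K → ℂ) (x0i : Fin N → ℂ)
    (P : Matrix (Fin K) (Fin N) ℂ → Matrix (Fin K) (Fin N) ℂ) : Prop :=
  ∀ Z, P Z ∈ Tspace h0i x0i ∧ ∀ W ∈ Tspace h0i x0i, finner W (Z - P Z) = 0

/-- Operator norm of `𝒜ᵢ` from `(ℂ^{K×N}, ‖·‖_F)` to `(ℂ^L, ‖·‖)`. -/
def calAiOpNorm {K N L : ℕ} (b : Fin L → Fin K → ℂ) (a : Fin L → Fin N → ℂ) : ℝ :=
  sSup {r : ℝ | ∃ Z : Matrix (Fin K) (Fin N) ℂ, frob Z ≤ 1 ∧ r = vnorm (calAi b a Z)}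

/-- Operator norm of `𝒜` from block-diagonal matrices with `‖·‖_F` to `ℂ^L`. -/
def calAOpNorm {K N L s : ℕ} (b : Fin L → Fin K → ℂ)
    (a : Fin s → Fin L → Fin N → ℂ) : ℝ :=
  sSup {r : ℝ | ∃ Z : Fin s → Matrix (Fin K) (Fin N) ℂ, famFrob Z ≤ 1 ∧ r = vnorm (calA b a Z)}

/-- Norm of a stacked vector in `ℂ^{ns}`. -/
def stackNorm {n s : ℕ} (u : Fin s → Fin n → ℂ) : ℝ := Real.sqrt (∑ i, vnormSq (u i))

/-- Norm of a point `z = (h,x) ∈ ℂ^{s(K+N)}`. -/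
def pairNorm {K N s : ℕ} (u : Fin s → Fin K → ℂ) (v : Fin s → Fin N → ℂ) : ℝ :=
  Real.sqrt (∑ i, vnormSq (u i) + ∑ i, vnormSq (v i))

/-- `z + t • w` componentwise, `t` real. -/
def shiftV {n s : ℕ} (u w : Fin s → Fin n → ℂ) (t : ℝ) : Fin s → Fin n → ℂ :=
  fun i k => u i k + (t : ℂ) * w i k

/-- `σ_max(h) = maxₗ √(Σᵢ |bₗ*hᵢ|²)` (unit `xᵢ`'s). -/
def sigmaMaxU {K L s : ℕ} (b : Fin L → Fin K → ℂ) (h : Fin s → Fin K → ℂ) : ℝ :=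
  ⨆ l, Real.sqrt (∑ i, ‖vinner (b l) (h i)‖ ^ 2)

/-!
Every argument of `G₀` in `G(u⁽⁰⁾, v⁽⁰⁾)` is at most `1`: the initial bounds give
`‖uᵢ‖² ≤ (4/3) d_{i0} ≤ 2dᵢ` and `L|bₗ*uᵢ|² ≤ (16/3) d_{i0} μ² ≤ 8dᵢμ²` since `dᵢ ≥ 0.9 d_{i0}`;
so `G = 0` and `F̃ = F`. Since `2/√3 ≤ 2` and `2ε/(5√s κ) ≤ ε`, the initial point lies in
`𝒩_d ∩ 𝒩_μ ∩ 𝒩_ε`, where the local RIP applies to `Δ = ℋ(u⁽⁰⁾, v⁽⁰⁾) - X₀`. Expanding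
`F = ‖𝒜(Δ)‖² - 2 Re ⟨𝒜(Δ), e⟩ + ‖e‖²`, the cross term is `Σᵢ ⟨Δᵢ, 𝒜ᵢ*(e)⟩`, and each block
`Δᵢ = uᵢvᵢ* - h_{i0}x_{i0}*` splits into two Frobenius-orthogonal rank-one matrices, whence
`|⟨Δᵢ, M⟩| ≤ √2 ‖M‖ ‖Δᵢ‖_F`. With `‖Δᵢ‖_F ≤ r d_{i0}`, `r = 2ε/(5√s κ)`, and Cauchy–Schwarz
`Σᵢ d_{i0} ≤ √s d₀`, the excess over `‖e‖²` is at most `(6/25 + 2/25) ε² d₀² / (s κ²)`, which is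
below `ε² d₀² / (3 s κ²)`.
-/

section Vectors

variable {n : ℕ}

lemma vnormSq_eq_norm_sq (v : Fin n → ℂ) : vnormSq v = ‖WithLp.toLp 2 v‖ ^ 2 := by
  rw [EuclideanSpace.norm_sq_eq]; rfl

lemma vnorm_eq_norm (v : Fin n → ℂ) : vnorm v = ‖WithLp.toLp 2 v‖ := by
  rw [vnorm, vnormSq_eq_norm_sq, Real.sqrt_sq (norm_nonneg _)]

lemma vinner_eq_inner (u v : Fin n → ℂ) :
    vinner u v = inner ℂ (WithLp.toLp 2 u) (WithLp.toLp 2 v) := by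
  simp [vinner, PiLp.inner_apply, mul_comm]

lemma vnormSq_nonneg (v : Fin n → ℂ) : 0 ≤ vnormSq v := by
  rw [vnormSq_eq_norm_sq]; positivity

lemma vnorm_nonneg (v : Fin n → ℂ) : 0 ≤ vnorm v := Real.sqrt_nonneg _

lemma vnorm_sq (v : Fin n → ℂ) : vnorm v ^ 2 = vnormSq v := by
  rw [vnorm_eq_norm, vnormSq_eq_norm_sq]

lemma norm_vinner_le (u v : Fin n → ℂ) : ‖vinner u v‖ ≤ vnorm u * vnorm v := by
  rw [vinner_eq_inner, vnorm_eq_norm, vnorm_eq_norm]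
  exact norm_inner_le_norm _ _

lemma vinner_self (u : Fin n → ℂ) : vinner u u = (vnormSq u : ℂ) := by
  rw [vinner_eq_inner, vnormSq_eq_norm_sq, inner_self_eq_norm_sq_to_K]
  push_cast; rfl

lemma vnormSq_sub (u v : Fin n → ℂ) :
    vnormSq (fun j => u j - v j) = vnormSq u - 2 * (vinner u v).re + vnormSq v := by
  simp only [vnormSq_eq_norm_sq, vinner_eq_inner]
  exact norm_sub_sq (𝕜 := ℂ) _ _

end Vectors

section Matrices

variable {K N : ℕ}

lemma opNorm_eq_norm (M : Matrix (Fin K) (Fin N) ℂ) :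
    opNorm M = ‖LinearMap.toContinuousLinearMap (Matrix.toLpLin 2 2 M)‖ := by
  rw [← ContinuousLinearMap.sSup_unitClosedBall_eq_norm, opNorm]
  congr 1
  ext r
  simp only [Set.mem_ofPred_eq, Set.mem_image, Metric.mem_closedBall, dist_zero_right]
  constructor
  · rintro ⟨v, hv, rfl⟩
    exact ⟨WithLp.toLp 2 v, by rwa [← vnorm_eq_norm], by rw [vnorm_eq_norm]; rfl⟩
  · rintro ⟨x, hx, rfl⟩
    exact ⟨x.ofLp, by rwa [vnorm_eq_norm], by rw [vnorm_eq_norm]; rfl⟩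

lemma opNorm_nonneg (M : Matrix (Fin K) (Fin N) ℂ) : 0 ≤ opNorm M := by
  rw [opNorm_eq_norm]; positivity

lemma vnorm_mulVec_le (M : Matrix (Fin K) (Fin N) ℂ) (v : Fin N → ℂ) :
    vnorm (M.mulVec v) ≤ opNorm M * vnorm v := by
  rw [opNorm_eq_norm, vnorm_eq_norm, vnorm_eq_norm]
  exact (LinearMap.toContinuousLinearMap (Matrix.toLpLin 2 2 M)).le_opNorm (WithLp.toLp 2 v)

lemma frob_sq (M : Matrix (Fin K) (Fin N) ℂ) : frob M ^ 2 = frobSq M :=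
  Real.sq_sqrt (Finset.sum_nonneg fun _ _ => Finset.sum_nonneg fun _ _ => by positivity)

lemma frobSq_rankOne (p : Fin K → ℂ) (q : Fin N → ℂ) :
    frobSq (rankOne p q) = vnormSq p * vnormSq q := by
  simp only [frobSq, rankOne, vnormSq, Matrix.of_apply, norm_mul, mul_pow, Complex.norm_conj,
    Finset.sum_mul_sum]

lemma finner_rankOne (p : Fin K → ℂ) (q : Fin N → ℂ) (M : Matrix (Fin K) (Fin N) ℂ) :
    finner (rankOne p q) M = vinner p (M.mulVec q) := by
  simp only [finner, rankOne, vinner, Matrix.mulVec, dotProduct, Matrix.of_apply,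
    map_mul, Complex.conj_conj, Finset.mul_sum]
  exact Finset.sum_congr rfl fun k _ => Finset.sum_congr rfl fun j _ => by ring

lemma finner_rankOne_rankOne (p p' : Fin K → ℂ) (q q' : Fin N → ℂ) :
    finner (rankOne p q) (rankOne p' q') = vinner p p' * vinner q' q := by
  simp only [finner, rankOne, vinner, Matrix.of_apply, map_mul, Complex.conj_conj,
    Finset.sum_mul_sum]
  exact Finset.sum_congr rfl fun k _ => Finset.sum_congr rfl fun j _ => by ring

lemma finner_add_left (A B M : Matrix (Fin K) (Fin N) ℂ) :
    finner (A + B) M = finner A M + finner B M := by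
  simp [finner, add_mul, Finset.sum_add_distrib]

lemma frobSq_add (A B : Matrix (Fin K) (Fin N) ℂ) :
    frobSq (A + B) = frobSq A + frobSq B + 2 * (finner A B).re := by
  simp only [frobSq, finner, Matrix.add_apply, Complex.re_sum, Finset.mul_sum,
    ← Finset.sum_add_distrib]
  refine Finset.sum_congr rfl fun k _ => Finset.sum_congr rfl fun j _ => ?_
  rw [← Complex.normSq_eq_norm_sq, ← Complex.normSq_eq_norm_sq, ← Complex.normSq_eq_norm_sq,
    Complex.normSq_add, ← Complex.conj_re, map_mul, Complex.conj_conj, mul_comm]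

lemma norm_finner_rankOne_le (p : Fin K → ℂ) (q : Fin N → ℂ) (M : Matrix (Fin K) (Fin N) ℂ) :
    ‖finner (rankOne p q) M‖ ≤ opNorm M * (vnorm p * vnorm q) := by
  rw [finner_rankOne]
  calc ‖vinner p (M.mulVec q)‖ ≤ vnorm p * vnorm (M.mulVec q) := norm_vinner_le _ _
    _ ≤ vnorm p * (opNorm M * vnorm q) :=
        mul_le_mul_of_nonneg_left (vnorm_mulVec_le M q) (vnorm_nonneg p)
    _ = opNorm M * (vnorm p * vnorm q) := by ring

end Matrices

section RankTwo

variable {K N : ℕ}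

lemma exists_rankOne_sub_rankOne_eq_add (p u : Fin K → ℂ) (q v : Fin N → ℂ) :
    ∃ (u' : Fin K → ℂ) (w : Fin N → ℂ), vinner p u' = 0 ∧
      rankOne u v - rankOne p q = rankOne p w + rankOne u' v := by
  set α : ℂ := vinner p u / (vnormSq p : ℂ)
  refine ⟨fun k => u k - α * p k, fun j => conj α * v j - q j, ?_, ?_⟩
  · have hsplit : vinner p (fun k => u k - α * p k) = vinner p u - α * vnormSq p := by
      simp only [vinner, mul_sub, Finset.sum_sub_distrib, ← vinner_self, Finset.mul_sum]
      congr 1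
      exact Finset.sum_congr rfl fun k _ => by ring
    rw [hsplit]
    by_cases hp : vnormSq p = 0
    · have : ‖vinner p u‖ ≤ 0 := by
        simpa [vnorm, hp] using norm_vinner_le p u
      simp [hp, norm_le_zero_iff.mp this]
    · rw [div_mul_cancel₀ _ (Complex.ofReal_ne_zero.mpr hp), sub_self]
  · ext k j
    simp only [rankOne, Matrix.sub_apply, Matrix.add_apply, Matrix.of_apply, map_sub, map_mul,
      Complex.conj_conj]
    ring

lemma norm_finner_rankOne_sub_rankOne_le (p u : Fin K → ℂ) (q v : Fin N → ℂ)
    (M : Matrix (Fin K) (Fin N) ℂ) :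
    ‖finner (rankOne u v - rankOne p q) M‖
      ≤ Real.sqrt 2 * opNorm M * frob (rankOne u v - rankOne p q) := by
  obtain ⟨u', w, horth, hdecomp⟩ := exists_rankOne_sub_rankOne_eq_add p u q v
  set a := vnorm p * vnorm w
  set c := vnorm u' * vnorm v
  have hfrob : frob (rankOne u v - rankOne p q) = Real.sqrt (a ^ 2 + c ^ 2) := by
    rw [frob, hdecomp, frobSq_add, finner_rankOne_rankOne, horth, frobSq_rankOne,
      frobSq_rankOne]
    simp only [a, c, mul_pow, vnorm_sq, zero_mul, Complex.zero_re, mul_zero, add_zero]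
  have hac : a + c ≤ Real.sqrt 2 * Real.sqrt (a ^ 2 + c ^ 2) := by
    rw [← Real.sqrt_mul zero_le_two]
    exact (le_abs_self _).trans (Real.abs_le_sqrt add_sq_le)
  calc ‖finner (rankOne u v - rankOne p q) M‖
      ≤ ‖finner (rankOne p w) M‖ + ‖finner (rankOne u' v) M‖ := by
        rw [hdecomp, finner_add_left]; exact norm_add_le _ _
    _ ≤ opNorm M * a + opNorm M * c :=
        add_le_add (norm_finner_rankOne_le p w M) (norm_finner_rankOne_le u' v M)
    _ ≤ opNorm M * (Real.sqrt 2 * Real.sqrt (a ^ 2 + c ^ 2)) := by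
        rw [← mul_add]; exact mul_le_mul_of_nonneg_left hac (opNorm_nonneg M)
    _ = Real.sqrt 2 * opNorm M * frob (rankOne u v - rankOne p q) := by rw [hfrob]; ring

end RankTwo

section Measurements

variable {K N L s : ℕ} (b : Fin L → Fin K → ℂ) (a : Fin s → Fin L → Fin N → ℂ)

lemma calA_sub (Z W : Fin s → Matrix (Fin K) (Fin N) ℂ) :
    calA b a (fun i => Z i - W i) = fun l => calA b a Z l - calA b a W l := by
  funext l
  simp only [calA, calAi, vinner, Matrix.sub_mulVec, Pi.sub_apply, mul_sub,
    Finset.sum_sub_distrib]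

lemma vinner_calA_eq_sum_finner (Z : Fin s → Matrix (Fin K) (Fin N) ℂ) (e : Fin L → ℂ) :
    vinner (calA b a Z) e = ∑ i, finner (Z i) (calAdj b (a i) e) := by
  simp only [vinner, calA, calAi, calAdj, finner, Matrix.mulVec, dotProduct, Matrix.of_apply,
    map_sum, map_mul, Complex.conj_conj, Finset.sum_mul, Finset.mul_sum]
  rw [Finset.sum_comm]
  refine Finset.sum_congr rfl fun i _ => ?_
  rw [Finset.sum_comm]
  refine Finset.sum_congr rfl fun k _ => ?_
  rw [Finset.sum_comm]
  exact Finset.sum_congr rfl fun j _ => Finset.sum_congr rfl fun l _ => by ring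

lemma opNorm_calAdj_le_AadjNorm (e : Fin L → ℂ) (i : Fin s) :
    opNorm (calAdj b (a i) e) ≤ AadjNorm b a e :=
  le_ciSup (Set.finite_range fun j => opNorm (calAdj b (a j) e)).bddAbove i

lemma AadjNorm_nonneg (e : Fin L → ℂ) : 0 ≤ AadjNorm b a e :=
  Real.iSup_nonneg fun _ => opNorm_nonneg _

lemma Fobj_le (h0 u : Fin s → Fin K → ℂ) (x0 v : Fin s → Fin N → ℂ) (e : Fin L → ℂ) :
    Fobj b a h0 x0 e u v
      ≤ vnormSq e + vnormSq (calA b a fun i => Hmap u v i - Hmap h0 x0 i)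
        + 2 * Real.sqrt 2 * AadjNorm b a e
          * ∑ i, frob (Hmap u v i - Hmap h0 x0 i) := by
  have hres : (fun l => calA b a (Hmap u v) l - yvec b a h0 x0 e l)
      = fun l => (calA b a fun i => Hmap u v i - Hmap h0 x0 i) l - e l := by
    funext l
    rw [calA_sub, yvec]
    ring
  have hcross : ‖vinner (calA b a fun i => Hmap u v i - Hmap h0 x0 i) e‖
      ≤ Real.sqrt 2 * AadjNorm b a e
          * ∑ i, frob (Hmap u v i - Hmap h0 x0 i) := by
    rw [vinner_calA_eq_sum_finner, Finset.mul_sum]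
    refine (norm_sum_le _ _).trans (Finset.sum_le_sum fun i _ => ?_)
    exact (norm_finner_rankOne_sub_rankOne_le _ _ _ _ _).trans <|
      mul_le_mul_of_nonneg_right
        (mul_le_mul_of_nonneg_left (opNorm_calAdj_le_AadjNorm b a e i) (Real.sqrt_nonneg 2))
        (Real.sqrt_nonneg _)
  rw [Fobj, hres, vnormSq_sub]
  linarith [Complex.abs_re_le_norm (vinner (calA b a fun i => Hmap u v i - Hmap h0 x0 i) e),
    neg_abs_le (vinner (calA b a fun i => Hmap u v i - Hmap h0 x0 i) e).re]

end Measurements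

section Parameters

variable {s : ℕ} {d0 : Fin s → ℝ}

lemma one_le_kappa (hs : 0 < s) (hd0 : ∀ i, 0 < d0 i) : 1 ≤ kappa d0 := by
  have : Nonempty (Fin s) := ⟨⟨0, hs⟩⟩
  obtain ⟨i, hi⟩ := exists_eq_ciInf_of_finite (f := d0)
  rw [kappa, one_le_div (hi ▸ hd0 i)]
  exact ciInf_le_ciSup (Set.finite_range d0).bddBelow (Set.finite_range d0).bddAbove

lemma sum_le_sqrt_card_mul_dtot (d0 : Fin s → ℝ) :
    ∑ i, d0 i ≤ Real.sqrt s * dtot d0 := by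
  rw [dtot, ← Real.sqrt_mul (Nat.cast_nonneg s)]
  refine Real.le_sqrt_of_sq_le ?_
  simpa using sq_sum_le_card_mul_sum_sq (s := (Finset.univ : Finset (Fin s))) (f := d0)

lemma famFrobSq_le {K N : ℕ} {Z : Fin s → Matrix (Fin K) (Fin N) ℂ} {r : ℝ}
    (hZ : ∀ i, frob (Z i) ≤ r * d0 i) : famFrobSq Z ≤ r ^ 2 * dtot d0 ^ 2 := by
  rw [dtot, Real.sq_sqrt (Finset.sum_nonneg fun i _ => sq_nonneg _), Finset.mul_sum]
  refine Finset.sum_le_sum fun i _ => ?_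
  rw [← frob_sq, ← mul_pow]
  exact pow_le_pow_left₀ (Real.sqrt_nonneg _) (hZ i) 2

lemma sum_frob_le {K N : ℕ} {Z : Fin s → Matrix (Fin K) (Fin N) ℂ} {r : ℝ} (hr : 0 ≤ r)
    (hZ : ∀ i, frob (Z i) ≤ r * d0 i) :
    ∑ i, frob (Z i) ≤ r * (Real.sqrt s * dtot d0) :=
  calc ∑ i, frob (Z i) ≤ r * ∑ i, d0 i := by
        rw [Finset.mul_sum]; exact Finset.sum_le_sum fun i _ => hZ i
    _ ≤ r * (Real.sqrt s * dtot d0) :=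
        mul_le_mul_of_nonneg_left (sum_le_sqrt_card_mul_dtot d0) hr

lemma initial_error_budget (hs : 0 < s) {ε D κ : ℝ} (hκ : 0 < κ) :
    3 / 2 * ((2 * ε / (5 * Real.sqrt s * κ)) ^ 2 * D ^ 2)
      + 2 * Real.sqrt 2 * (ε * D / (10 * Real.sqrt 2 * s * κ))
        * (2 * ε / (5 * Real.sqrt s * κ) * (Real.sqrt s * D))
      ≤ ε ^ 2 * D ^ 2 / (3 * s * κ ^ 2) := by
  have hσ : 0 < Real.sqrt s := Real.sqrt_pos.mpr (Nat.cast_pos.mpr hs)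
  have hσsq : Real.sqrt s ^ 2 = s := Real.sq_sqrt (Nat.cast_nonneg s)
  generalize Real.sqrt s = σ at hσ hσsq ⊢
  rw [← hσsq]
  field_simp
  nlinarith [sq_nonneg (ε * D), hσ, hκ]

end Parameters

lemma Fobj_le_of_frob_le {K N L s : ℕ} (b : Fin L → Fin K → ℂ) (a : Fin s → Fin L → Fin N → ℂ)
    (h0 u : Fin s → Fin K → ℂ) (x0 v : Fin s → Fin N → ℂ) (e : Fin L → ℂ) (d0 : Fin s → ℝ)
    {r E : ℝ} (hr : 0 ≤ r) (hE : AadjNorm b a e ≤ E)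
    (hRIP : vnormSq (calA b a fun i => Hmap u v i - Hmap h0 x0 i)
      ≤ 3 / 2 * famFrobSq (fun i => Hmap u v i - Hmap h0 x0 i))
    (hfrob : ∀ i, frob (Hmap u v i - Hmap h0 x0 i) ≤ r * d0 i) :
    Fobj b a h0 x0 e u v
      ≤ vnormSq e + 3 / 2 * (r ^ 2 * dtot d0 ^ 2)
        + 2 * Real.sqrt 2 * E * (r * (Real.sqrt s * dtot d0)) := by
  have hsum : 0 ≤ ∑ i, frob (Hmap u v i - Hmap h0 x0 i) :=
    Finset.sum_nonneg fun i _ => Real.sqrt_nonneg _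
  have hE0 : 0 ≤ E := (AadjNorm_nonneg b a e).trans hE
  calc Fobj b a h0 x0 e u v
      ≤ vnormSq e + 3 / 2 * famFrobSq (fun i => Hmap u v i - Hmap h0 x0 i)
        + 2 * Real.sqrt 2 * AadjNorm b a e * ∑ i, frob (Hmap u v i - Hmap h0 x0 i) := by
        linarith [Fobj_le b a h0 u x0 v e]
    _ ≤ _ := by
        gcongr
        exacts [famFrobSq_le hfrob, sum_frob_le hr hfrob]

lemma G0_eq_zero {z : ℝ} (hz : z ≤ 1) : G0 z = 0 := by
  simp [G0, max_eq_right (sub_nonpos.mpr hz)]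

lemma Greg_eq_zero {K N L s : ℕ} (b : Fin L → Fin K → ℂ) (ρ μ : ℝ) (dd : Fin s → ℝ)
    (h : Fin s → Fin K → ℂ) (x : Fin s → Fin N → ℂ)
    (hh : ∀ i, vnormSq (h i) ≤ 2 * dd i) (hx : ∀ i, vnormSq (x i) ≤ 2 * dd i)
    (hhμ : ∀ i l, (L : ℝ) * ‖vinner (b l) (h i)‖ ^ 2 ≤ 8 * dd i * μ ^ 2) :
    Greg b ρ μ dd h x = 0 := by
  refine Finset.sum_eq_zero fun i _ => ?_
  have hdd : 0 ≤ dd i := by linarith [hh i, vnormSq_nonneg (h i)]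
  rw [Gi, G0_eq_zero (div_le_one_of_le₀ (hh i) (by positivity)),
    G0_eq_zero (div_le_one_of_le₀ (hx i) (by positivity)),
    Finset.sum_eq_zero fun l _ => G0_eq_zero (div_le_one_of_le₀ (hhμ i l) (by positivity))]
  ring

lemma sq_le_of_le_div_sqrt_three_mul {x c d : ℝ} (hx : 0 ≤ x) (hd : 0 ≤ d)
    (h : x ≤ c / Real.sqrt 3 * Real.sqrt d) : x ^ 2 ≤ c ^ 2 / 3 * d := by
  calc x ^ 2 ≤ (c / Real.sqrt 3 * Real.sqrt d) ^ 2 := pow_le_pow_left₀ hx h 2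
    _ = c ^ 2 / 3 * d := by
        rw [mul_pow, div_pow, Real.sq_sqrt zero_le_three, Real.sq_sqrt hd]

lemma Greg_eq_zero_of_init {K N L s : ℕ} (b : Fin L → Fin K → ℂ) (ρ μ : ℝ)
    (d0 dd : Fin s → ℝ) (hd0 : ∀ i, 0 ≤ d0 i) (hdd : ∀ i, 0.9 * d0 i ≤ dd i)
    (u : Fin s → Fin K → ℂ) (v : Fin s → Fin N → ℂ)
    (hu : ∀ i, vnorm (u i) ≤ 2 / Real.sqrt 3 * Real.sqrt (d0 i))
    (hv : ∀ i, vnorm (v i) ≤ 2 / Real.sqrt 3 * Real.sqrt (d0 i))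
    (huμ : ∀ i l, Real.sqrt L * ‖vinner (b l) (u i)‖ ≤ 4 / Real.sqrt 3 * Real.sqrt (d0 i) * μ) :
    Greg b ρ μ dd u v = 0 := by
  refine Greg_eq_zero b ρ μ dd u v (fun i => ?_) (fun i => ?_) (fun i l => ?_)
  · have := sq_le_of_le_div_sqrt_three_mul (vnorm_nonneg _) (hd0 i) (hu i)
    rw [vnorm_sq] at this
    linarith [hd0 i, hdd i]
  · have := sq_le_of_le_div_sqrt_three_mul (vnorm_nonneg _) (hd0 i) (hv i)
    rw [vnorm_sq] at this
    linarith [hd0 i, hdd i]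
  · have := sq_le_of_le_div_sqrt_three_mul (by positivity) (hd0 i)
      ((huμ i l).trans_eq (by ring : _ = 4 * μ / Real.sqrt 3 * Real.sqrt (d0 i)))
    rw [mul_pow, Real.sq_sqrt (Nat.cast_nonneg L)] at this
    nlinarith [hd0 i, hdd i, sq_nonneg μ]

theorem statement5_general
    {K N L s : ℕ} (hs : 0 < s)
    (b : Fin L → Fin K → ℂ)
    (a : Fin s → Fin L → Fin N → ℂ)
    (h0 : Fin s → Fin K → ℂ) (x0 : Fin s → Fin N → ℂ)
    (d0 : Fin s → ℝ) (hd0 : ∀ i, 0 < d0 i)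
    (e : Fin L → ℂ) (μ ρ ε : ℝ) (dd : Fin s → ℝ)
    (hμ : 0 < μ) (hε : 0 < ε)
    (hdd : ∀ i, 0.9 * d0 i ≤ dd i ∧ dd i ≤ 1.1 * d0 i)
    (hRIP : LocalRIP b a h0 x0 d0 μ ε)
    (hAe : AadjNorm b a e ≤ ε * dtot d0 / (10 * Real.sqrt 2 * (s : ℝ) * kappa d0))
    (u0 : Fin s → Fin K → ℂ) (v0 : Fin s → Fin N → ℂ)
    (hu0d : ∀ i, vnorm (u0 i) ≤ 2 / Real.sqrt 3 * Real.sqrt (d0 i))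
    (hv0d : ∀ i, vnorm (v0 i) ≤ 2 / Real.sqrt 3 * Real.sqrt (d0 i))
    (hu0μ : ∀ i l, Real.sqrt L * ‖vinner (b l) (u0 i)‖
        ≤ 4 / Real.sqrt 3 * Real.sqrt (d0 i) * μ)
    (hinit : ∀ i, deltaI (h0 i) (x0 i) (d0 i) (u0 i) (v0 i)
        ≤ 2 * ε / (5 * Real.sqrt s * kappa d0)) :
    Greg b ρ μ dd u0 v0 = 0
    ∧ Ftil b a h0 x0 e ρ μ dd u0 v0 = Fobj b a h0 x0 e u0 v0
    ∧ Fobj b a h0 x0 e u0 v0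
        ≤ vnormSq e + ε ^ 2 * dtot d0 ^ 2 / (3 * (s : ℝ) * kappa d0 ^ 2)
    ∧ inNeps h0 x0 d0 ε u0 v0
    ∧ inNF b a h0 x0 e d0 ρ μ dd ε u0 v0 := by
  have hκ : 1 ≤ kappa d0 := one_le_kappa hs hd0
  have hσ : 1 ≤ Real.sqrt s := Real.one_le_sqrt.mpr (Nat.one_le_cast.mpr hs)
  set r := 2 * ε / (5 * Real.sqrt s * kappa d0)
  have hr : 0 ≤ r := by positivity
  have hrε : r ≤ ε := div_le_of_le_mul₀ (by positivity) hε.le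
    (by nlinarith [mul_le_mul_of_nonneg_left (one_le_mul_of_one_le_of_one_le hσ hκ) hε.le])
  have hNeps : inNeps h0 x0 d0 ε u0 v0 := fun i => (hinit i).trans hrε
  have h3 : 1 ≤ Real.sqrt 3 := Real.one_le_sqrt.mpr (by norm_num)
  have hNd : inNd d0 u0 v0 := fun i =>
    ⟨(hu0d i).trans (by gcongr; exact div_le_self zero_le_two h3),
      (hv0d i).trans (by gcongr; exact div_le_self zero_le_two h3)⟩
  have hNμ : inNmu b d0 μ u0 := fun i l =>
    (hu0μ i l).trans (by gcongr; exact div_le_self zero_le_four h3)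
  have hG : Greg b ρ μ dd u0 v0 = 0 := Greg_eq_zero_of_init b ρ μ d0 dd (fun i => (hd0 i).le)
    (fun i => (hdd i).1) u0 v0 hu0d hv0d hu0μ
  have hF : Fobj b a h0 x0 e u0 v0
      ≤ vnormSq e + ε ^ 2 * dtot d0 ^ 2 / (3 * (s : ℝ) * kappa d0 ^ 2) := by
    have := Fobj_le_of_frob_le b a h0 u0 x0 v0 e d0 hr hAe (hRIP u0 v0 hNd hNμ hNeps).2
      fun i => (div_le_iff₀ (hd0 i)).mp (hinit i)
    linarith [initial_error_budget (ε := ε) (D := dtot d0) hs (zero_lt_one.trans_le hκ)]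
  have hFtil : Ftil b a h0 x0 e ρ μ dd u0 v0 = Fobj b a h0 x0 e u0 v0 := by
    rw [Ftil, hG, add_zero]
  exact ⟨hG, hFtil, hF, hNeps, by rw [inNF, hFtil]; linarith⟩

/-- the initial guess lies in `𝒩_ε ∩ 𝒩_F̃`. -/
theorem statement5
    {K N L s : ℕ} (hK : 0 < K) (hN : 0 < N) (hL : 0 < L) (hs : 0 < s)
    (b : Fin L → Fin K → ℂ) (hb : BtBeqI b)
    (a : Fin s → Fin L → Fin N → ℂ)
    (h0 : Fin s → Fin K → ℂ) (x0 : Fin s → Fin N → ℂ)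
    (d0 : Fin s → ℝ) (hd0 : ∀ i, 0 < d0 i)
    (hh0 : ∀ i, vnorm (h0 i) = Real.sqrt (d0 i))
    (hx0 : ∀ i, vnorm (x0 i) = Real.sqrt (d0 i))
    (e : Fin L → ℂ) (μ ρ ε : ℝ) (dd : Fin s → ℝ)
    (hμ : 0 < μ) (hρ0 : 0 < ρ) (hε : 0 < ε) (hε15 : ε ≤ 1 / 15)
    (hdd : ∀ i, 0.9 * d0 i ≤ dd i ∧ dd i ≤ 1.1 * d0 i)
    (hRIP : LocalRIP b a h0 x0 d0 μ ε)
    (hAe : AadjNorm b a e ≤ ε * dtot d0 / (10 * Real.sqrt 2 * (s : ℝ) * kappa d0))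
    (u0 : Fin s → Fin K → ℂ) (v0 : Fin s → Fin N → ℂ)
    (hu0d : ∀ i, vnorm (u0 i) ≤ 2 / Real.sqrt 3 * Real.sqrt (d0 i))
    (hv0d : ∀ i, vnorm (v0 i) ≤ 2 / Real.sqrt 3 * Real.sqrt (d0 i))
    (hu0μ : ∀ i l, Real.sqrt L * ‖vinner (b l) (u0 i)‖
        ≤ 4 / Real.sqrt 3 * Real.sqrt (d0 i) * μ)
    (hinit : ∀ i, deltaI (h0 i) (x0 i) (d0 i) (u0 i) (v0 i)
        ≤ 2 * ε / (5 * Real.sqrt s * kappa d0)) :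
    Greg b ρ μ dd u0 v0 = 0
    ∧ Ftil b a h0 x0 e ρ μ dd u0 v0 = Fobj b a h0 x0 e u0 v0
    ∧ Fobj b a h0 x0 e u0 v0
        ≤ vnormSq e + ε ^ 2 * dtot d0 ^ 2 / (3 * (s : ℝ) * kappa d0 ^ 2)
    ∧ inNeps h0 x0 d0 ε u0 v0
    ∧ inNF b a h0 x0 e d0 ρ μ dd ε u0 v0 :=
  statement5_general hs b a h0 x0 d0 hd0 e μ ρ ε dd hμ hε hdd hRIP hAe u0 v0 hu0d hv0d hu0μ hinit

end RGD
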